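/- arXiv:math/0611307 — 3 statements merged into one kernel-verified Lean document; each statement's English description precedes it below -/
import Mathlib

section
/- Let p be a prime and let β₂ ≤ β₃ be odd positive integers; set m = (β₂−1)/2. Define the polynomial F(X) = Σ_{i=0}^{1} Σ_{j=0}^{m−i} p^{i+j} X^{i+2j} + Σ_{i=0}^{1} Σ_{j=0}^{m−i} p^{m−j} X^{β₃+2+i+2j} + p^{m+1} Σ_{i=0}^{1} Σ_{j=0}^{β₃−β₂} X^{β₂+i+j}. Then F(−1) = 0 and F′(−1) = β₂ + β₃ + 3 − p^{m+1} − 2·(p^{m+1} − 1)/(p − 1). -/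
open Polynomial Finset

private lemma sum_range_two' {M : Type*} [AddCommMonoid M] (f : ℕ → M) :
    ∑ i ∈ range 2, f i = f 0 + f 1 := by
  rw [show (2:ℕ) = 1 + 1 from rfl, Finset.sum_range_succ, Finset.sum_range_one]

/-- Evaluation of Katsurada's polynomial in the case `β₂, β₃` odd,
`ξ = 1`, `σ = 2`, `η = 1`: `F(−1) = 0` and
`F′(−1) = β₂ + β₃ + 3 − p^{m+1} − 2(p^{m+1}−1)/(p−1)`, where `m = (β₂−1)/2`. -/
theorem stmt_13 (p : ℕ) (hp : p.Prime) (β₂ β₃ m : ℕ)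
    (hβ₂ : 0 < β₂) (hβ₂odd : Odd β₂) (hβ₃odd : Odd β₃) (hle : β₂ ≤ β₃)
    (hm : β₂ = 2 * m + 1)
    (F : Polynomial ℚ)
    (hF : F =
      (∑ i ∈ range 2, ∑ j ∈ range (m + 1 - i),
        C ((p : ℚ) ^ (i + j)) * X ^ (i + 2 * j)) +
      (∑ i ∈ range 2, ∑ j ∈ range (m + 1 - i),
        C ((p : ℚ) ^ (m - j)) * X ^ (β₃ + 2 + i + 2 * j)) +
      C ((p : ℚ) ^ (m + 1)) *
        ∑ i ∈ range 2, ∑ j ∈ range (β₃ - β₂ + 1), X ^ (β₂ + i + j)) :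
    F.eval (-1) = 0 ∧
    (derivative F).eval (-1) =
      (β₂ : ℚ) + β₃ + 3 - (p : ℚ) ^ (m + 1) - 2 * ((p : ℚ) ^ (m + 1) - 1) / ((p : ℚ) - 1) := by
  subst hF hm
  obtain ⟨n, hn⟩ := hβ₃odd
  obtain ⟨k, hk⟩ : ∃ k, n = m + k := ⟨n - m, by omega⟩
  subst hn hk
  rw [show 2 * (m + k) + 1 - (2 * m + 1) + 1 = 2 * k + 1 from by omega]
  set q : ℚ := (p : ℚ) with hq
  set G : ℚ := ∑ x ∈ range m, q ^ (x + 1) with hG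
  set W : ℚ := ∑ x ∈ range m, (x : ℚ) * q ^ (x + 1) with hW
  set T : ℚ := ∑ x ∈ range m, q ^ (m - x) with hT
  -- reflection: T = G
  have hTG : T = G := by
    rw [hT, hG]
    rw [Finset.sum_congr rfl (fun x hx => by
      rw [show m - x = m - 1 - x + 1 from by
        have := Finset.mem_range.mp hx; omega] :
      ∀ x ∈ range m, q ^ (m - x) = q ^ (m - 1 - x + 1))]
    exact Finset.sum_range_reflect (fun x => q ^ (x + 1)) m
  have hq1 : q ≠ 1 := by
    rw [hq]; exact_mod_cast hp.one_lt.ne'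
  have hGeom : (q ^ (m + 1) - 1) / (q - 1) = G + 1 := by
    rw [← geom_sum_eq hq1 (m + 1), Finset.sum_range_succ', pow_zero, hG]
  constructor
  · simp only [sum_range_two', eval_add, eval_mul, eval_pow, eval_C, eval_X, eval_finset_sum,
      Nat.sub_zero, Nat.add_sub_cancel, zero_add, add_zero, Nat.zero_add, Nat.add_zero]
    simp only [pow_add, pow_mul, neg_one_sq, one_pow, one_mul, mul_one, pow_zero, pow_one]
    have hC : ∑ x ∈ range (2 * k + 1), (-1 : ℚ) * (-1) ^ x +
        ∑ x ∈ range (2 * k + 1), (-1 : ℚ) * -1 * (-1) ^ x = 0 := by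
      rw [← Finset.sum_add_distrib]
      exact Finset.sum_eq_zero fun x _ => by ring
    rw [hC, mul_zero, add_zero]
    rw [Finset.sum_range_succ' (fun x => q ^ x) m,
      Finset.sum_range_succ (fun x => q ^ (m - x) * (-1 : ℚ)) m]
    simp only [pow_zero, Nat.sub_self]
    rw [show (∑ x ∈ range m, q ^ (m - x) * (-1 : ℚ)) = -T from by
      rw [hT, ← Finset.sum_neg_distrib]; exact Finset.sum_congr rfl fun x _ => by ring]
    rw [show (∑ x ∈ range m, q ^ (m - x) * ((-1 : ℚ) * -1)) = T from by
      rw [hT]; exact Finset.sum_congr rfl fun x _ => by ring]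
    rw [show (∑ x ∈ range m, q * q ^ x * (-1 : ℚ)) = -G from by
      rw [hG, ← Finset.sum_neg_distrib]; exact Finset.sum_congr rfl fun x _ => by ring]
    rw [show (∑ x ∈ range m, q ^ (x + 1)) = G from hG.symm]
    ring
  · simp only [derivative_add, derivative_sum, derivative_C_mul, derivative_X_pow,
      sum_range_two', eval_add, eval_mul, eval_pow, eval_C, eval_X, eval_finset_sum,
      Nat.sub_zero, Nat.add_sub_cancel, zero_add, add_zero, Nat.zero_add, Nat.add_zero]
    -- S1
    have hS1 : ∑ x ∈ range (m + 1), q ^ x * ((2 * x : ℕ) * (-1 : ℚ) ^ (2 * x - 1)) =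
        -(2 * W + 2 * G) := by
      rw [Finset.sum_congr rfl (fun x _ => by
        rcases x with _ | x
        · simp
        · rw [show 2 * (x + 1) - 1 = 2 * x + 1 from by omega,
            (odd_two_mul_add_one x).neg_one_pow]
          push_cast; ring :
        ∀ x ∈ range (m + 1),
          q ^ x * ((2 * x : ℕ) * (-1 : ℚ) ^ (2 * x - 1)) = -(2 * (x : ℚ) * q ^ x))]
      rw [Finset.sum_range_succ' (fun x => -(2 * (x : ℚ) * q ^ x)) m]
      rw [Finset.sum_congr rfl (fun x _ => by push_cast; ring :
        ∀ x ∈ range m, -(2 * ((x + 1 : ℕ) : ℚ) * q ^ (x + 1)) =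
          -(2 * ((x : ℚ) * q ^ (x + 1))) + -(2 * q ^ (x + 1)))]
      rw [Finset.sum_add_distrib, Finset.sum_neg_distrib, Finset.sum_neg_distrib,
        ← Finset.mul_sum, ← Finset.mul_sum, ← hW, ← hG]
      ring
    rw [hS1]
    -- S2
    have hS2 : ∑ x ∈ range m, q ^ (1 + x) * ((1 + 2 * x : ℕ) * (-1 : ℚ) ^ (1 + 2 * x - 1)) =
        G + 2 * W := by
      rw [Finset.sum_congr rfl (fun x _ => by
        rw [show 1 + 2 * x - 1 = 2 * x from by omega, (even_two_mul x).neg_one_pow]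
        push_cast; ring :
        ∀ x ∈ range m, q ^ (1 + x) * ((1 + 2 * x : ℕ) * (-1 : ℚ) ^ (1 + 2 * x - 1)) =
          q ^ (x + 1) + 2 * ((x : ℚ) * q ^ (x + 1)))]
      rw [Finset.sum_add_distrib, hG, hW, Finset.mul_sum]
    rw [hS2]
    have hS3 : ∑ x ∈ range m, q ^ (m - x) *
        ((2 * (m + k) + 1 + 2 + 2 * x : ℕ) * (-1 : ℚ) ^ (2 * (m + k) + 1 + 2 + 2 * x - 1)) +
        ∑ x ∈ range m, q ^ (m - x) *
        ((2 * (m + k) + 1 + 2 + 1 + 2 * x : ℕ) * (-1 : ℚ) ^ (2 * (m + k) + 1 + 2 + 1 + 2 * x - 1)) =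
        -T := by
      rw [← Finset.sum_add_distrib, hT, ← Finset.sum_neg_distrib]
      refine Finset.sum_congr rfl fun x _ => ?_
      rw [show 2 * (m + k) + 1 + 2 + 2 * x - 1 = 2 * ((m + k) + 1 + x) from by omega,
        show 2 * (m + k) + 1 + 2 + 1 + 2 * x - 1 = 2 * ((m + k) + 1 + x) + 1 from by omega,
        (even_two_mul _).neg_one_pow, (odd_two_mul_add_one _).neg_one_pow]
      push_cast; ring
    have hS34 : (∑ x ∈ range (m + 1), q ^ (m - x) *
        ((2 * (m + k) + 1 + 2 + 2 * x : ℕ) * (-1 : ℚ) ^ (2 * (m + k) + 1 + 2 + 2 * x - 1))) +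
        ∑ x ∈ range m, q ^ (m - x) *
        ((2 * (m + k) + 1 + 2 + 1 + 2 * x : ℕ) * (-1 : ℚ) ^ (2 * (m + k) + 1 + 2 + 1 + 2 * x - 1)) =
        -T + (4 * (m : ℚ) + 2 * (k : ℚ) + 3) := by
      rw [Finset.sum_range_succ
        (fun x => q ^ (m - x) *
          ((2 * (m + k) + 1 + 2 + 2 * x : ℕ) * (-1 : ℚ) ^ (2 * (m + k) + 1 + 2 + 2 * x - 1))) m,
        add_right_comm, hS3]
      simp only [Nat.sub_self, pow_zero, one_mul]
      rw [show 2 * (m + k) + 1 + 2 + 2 * m - 1 = 2 * ((m + k) + 1 + m) from by omega,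
        (even_two_mul _).neg_one_pow]
      push_cast; ring
    rw [hS34]
    have hS56 : ∑ x ∈ range (2 * k + 1), ((2 * m + 1 + x : ℕ) : ℚ) * (-1) ^ (2 * m + 1 + x - 1) +
        ∑ x ∈ range (2 * k + 1), ((2 * m + 1 + 1 + x : ℕ) : ℚ) * (-1) ^ (2 * m + 1 + 1 + x - 1) =
        -1 := by
      rw [← Finset.sum_add_distrib]
      rw [Finset.sum_congr rfl (fun x _ => by
        rw [show 2 * m + 1 + x - 1 = 2 * m + x from by omega,
          show 2 * m + 1 + 1 + x - 1 = 2 * m + 1 + x from by omega]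
        have e1 : (-1 : ℚ) ^ (2 * m + x) = (-1) ^ x := by
          rw [pow_add, pow_mul, neg_one_sq, one_pow, one_mul]
        have e2 : (-1 : ℚ) ^ (2 * m + 1 + x) = -(-1) ^ x := by
          rw [pow_add, pow_add, pow_mul, neg_one_sq, one_pow, pow_one]; ring
        rw [e1, e2]; push_cast; ring :
        ∀ x ∈ range (2 * k + 1),
          ((2 * m + 1 + x : ℕ) : ℚ) * (-1) ^ (2 * m + 1 + x - 1) +
            ((2 * m + 1 + 1 + x : ℕ) : ℚ) * (-1) ^ (2 * m + 1 + 1 + x - 1) = -(-1) ^ x)]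
      rw [Finset.sum_neg_distrib, neg_one_geom_sum,
        if_neg (by simp [Nat.even_add_one, even_two_mul] : ¬ Even (2 * k + 1))]
    rw [hS56, hTG, mul_div_assoc, hGeom]
    push_cast; ring
end

section
/- Let p be a prime, let β₂ be an even positive integer and β₃ ≥ β₂ an integer; set η = (−1)^{β₃} (η = 1 if β₃ even, η = −1 if β₃ odd). Define F(X) = Σ_{i=0}^{1} Σ_{j=0}^{β₂/2−i} p^{i+j} X^{i+2j} + η·Σ_{i=0}^{1} Σ_{j=0}^{β₂/2−i} p^{β₂/2−j} X^{β₃+1+i+2j}. Then F(−1) = 0 and F′(−1) = β₂ + β₃ + 3 − 2·(p^{β₂/2+1} − 1)/(p − 1). -/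
open Polynomial Finset

/-- Evaluation of Katsurada's polynomial in the case `β₂` even (`ξ = 0`, `σ = 1`),
`η = (−1)^{β₃}`: `F(−1) = 0` and
`F′(−1) = β₂ + β₃ + 3 − 2(p^{β₂/2+1}−1)/(p−1)`. -/
theorem stmt_15 (p : ℕ) (hp : p.Prime) (β₂ β₃ : ℕ)
    (hβ₂ : 0 < β₂) (hβ₂even : Even β₂) (hle : β₂ ≤ β₃)
    (η : ℚ) (hη : η = (-1 : ℚ) ^ β₃)
    (F : Polynomial ℚ)
    (hF : F =
      (∑ i ∈ range 2, ∑ j ∈ range (β₂ / 2 + 1 - i),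
        C ((p : ℚ) ^ (i + j)) * X ^ (i + 2 * j)) +
      C η * (∑ i ∈ range 2, ∑ j ∈ range (β₂ / 2 + 1 - i),
        C ((p : ℚ) ^ (β₂ / 2 - j)) * X ^ (β₃ + 1 + i + 2 * j))) :
    F.eval (-1) = 0 ∧
    (derivative F).eval (-1) =
      (β₂ : ℚ) + β₃ + 3 - 2 * ((p : ℚ) ^ (β₂ / 2 + 1) - 1) / ((p : ℚ) - 1) := by
  obtain ⟨m, rfl⟩ := hβ₂even
  have hdiv : (m + m) / 2 = m := by omega
  rw [hdiv] at hF ⊢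
  subst hF hη
  have hsq : ((-1:ℚ) ^ β₃) * ((-1:ℚ) ^ β₃) = 1 := by
    rw [← pow_add]; exact Even.neg_one_pow ⟨β₃, rfl⟩
  -- helper sums
  have h1 : ∑ j ∈ range (m+1), (p:ℚ)^j = 1 + ∑ j ∈ range m, (p:ℚ)^(j+1) := by
    rw [Finset.sum_range_succ']; simp [add_comm]
  have h2 : ∑ j ∈ range (m+1), (p:ℚ)^(m-j) = ∑ j ∈ range (m+1), (p:ℚ)^j := by
    rw [← Finset.sum_range_reflect]
    exact Finset.sum_congr rfl fun j hj => by
      congr 1; simp at hj; omega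
  have h3 : ∑ j ∈ range m, (p:ℚ)^(m-j) = ∑ j ∈ range m, (p:ℚ)^(j+1) := by
    have := Finset.sum_range_succ (fun j => (p:ℚ)^(m-j)) m
    rw [Finset.sum_range_succ (fun j => (p:ℚ)^(m-j)) m] at h2
    simp only [Nat.sub_self, pow_zero] at h2
    linarith [h1]
  constructor
  · simp only [eval_add, eval_mul, eval_finset_sum, eval_C, eval_pow, eval_X,
      Finset.sum_range_succ, Finset.sum_range_one, Finset.range_zero,
      Finset.sum_empty, Nat.sub_zero, Nat.add_sub_cancel, zero_add,
      pow_add, pow_mul, neg_one_sq, one_pow, pow_one, pow_zero, mul_one, mul_neg,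
      eval_one, one_mul, neg_neg, Finset.sum_neg_distrib]
    have e1 : ∑ x ∈ range m, (p:ℚ)*(p:ℚ)^x = ∑ x ∈ range m, (p:ℚ)^(x+1) :=
      Finset.sum_congr rfl fun x _ => by ring
    have hsum : ∑ x ∈ range m, (p:ℚ)^x + (p:ℚ)^m - ∑ x ∈ range m, (p:ℚ)*(p:ℚ)^x = 1 := by
      have h4 := Finset.sum_range_succ (fun x => (p:ℚ)^x) m
      rw [e1]; linarith [h1]
    rw [Nat.sub_self, pow_zero, one_mul]
    linear_combination hsum - hsq
  · simp only [derivative_add, derivative_C_mul, derivative_sum, derivative_mul,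
      derivative_C, derivative_X_pow, zero_mul, zero_add,
      eval_add, eval_mul, eval_finset_sum, eval_C, eval_pow, eval_X,
      Finset.sum_range_succ, Finset.sum_range_one, Finset.range_zero,
      Finset.sum_empty, Nat.sub_zero, Nat.add_sub_cancel, zero_add]
    have hm1 : 1 ≤ m := by omega
    have hd1 : ∑ x ∈ Finset.range m, (p:ℚ) ^ x * (((2 * x : ℕ):ℚ) * (-1:ℚ) ^ (2 * x - 1)) =
        -2 * ∑ x ∈ Finset.range m, (x:ℚ) * (p:ℚ)^x := by
      rw [Finset.mul_sum]
      refine Finset.sum_congr rfl fun x _ => ?_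
      rcases Nat.eq_zero_or_pos x with rfl | hx
      · simp
      · have h : 2 * x - 1 = 2 * (x - 1) + 1 := by omega
        rw [h, pow_add, pow_mul]
        push_cast
        norm_num
        ring
    have hd1m : (p:ℚ) ^ m * (((2 * m : ℕ):ℚ) * (-1:ℚ) ^ (2 * m - 1)) =
        -2 * (m:ℚ) * (p:ℚ)^m := by
      have h : 2 * m - 1 = 2 * (m - 1) + 1 := by omega
      rw [h, pow_add, pow_mul]
      push_cast
      norm_num
      ring
    have hd2 : ∑ x ∈ Finset.range m, (p:ℚ) ^ (1 + x) * (((1 + 2 * x : ℕ):ℚ) * (-1:ℚ) ^ (1 + 2 * x - 1)) =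
        ∑ x ∈ Finset.range m, (1 + 2 * (x:ℚ)) * (p:ℚ)^(x+1) := by
      refine Finset.sum_congr rfl fun x _ => ?_
      have h : 1 + 2 * x - 1 = 2 * x := by omega
      rw [h, pow_mul, add_comm 1 x]
      push_cast
      norm_num
      ring
    have hd3 : ∑ x ∈ Finset.range m, (p:ℚ) ^ (m - x) * (((β₃ + 1 + 0 + 2 * x : ℕ):ℚ) * (-1:ℚ) ^ (β₃ + 1 + 0 + 2 * x - 1)) =
        (-1:ℚ)^β₃ * ∑ x ∈ Finset.range m, ((β₃:ℚ) + 1 + 2 * x) * (p:ℚ)^(m-x) := by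
      rw [Finset.mul_sum]
      refine Finset.sum_congr rfl fun x _ => ?_
      have h : β₃ + 1 + 0 + 2 * x - 1 = β₃ + 2 * x := by omega
      rw [h, pow_add, pow_mul]
      push_cast
      norm_num
      ring
    have hd3m : (p:ℚ) ^ (m - m) * (((β₃ + 1 + 0 + 2 * m : ℕ):ℚ) * (-1:ℚ) ^ (β₃ + 1 + 0 + 2 * m - 1)) =
        (-1:ℚ)^β₃ * ((β₃:ℚ) + 1 + 2 * m) := by
      have h : β₃ + 1 + 0 + 2 * m - 1 = β₃ + 2 * m := by omega
      rw [h, Nat.sub_self, pow_zero, pow_add, pow_mul]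
      push_cast
      norm_num
      ring
    have hd4 : ∑ x ∈ Finset.range m, (p:ℚ) ^ (m - x) * (((β₃ + 1 + 1 + 2 * x : ℕ):ℚ) * (-1:ℚ) ^ (β₃ + 1 + 1 + 2 * x - 1)) =
        -((-1:ℚ)^β₃) * ∑ x ∈ Finset.range m, ((β₃:ℚ) + 2 + 2 * x) * (p:ℚ)^(m-x) := by
      rw [neg_mul, Finset.mul_sum, ← Finset.sum_neg_distrib]
      refine Finset.sum_congr rfl fun x _ => ?_
      have h : β₃ + 1 + 1 + 2 * x - 1 = β₃ + 2 * x + 1 := by omega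
      rw [h, pow_add, pow_add, pow_mul]
      push_cast
      norm_num
      ring
    rw [hd1, hd1m, hd2, hd3, hd3m, hd4]
    have hB : ∑ x ∈ Finset.range m, (x:ℚ) * (p:ℚ)^x + (m:ℚ)*(p:ℚ)^m =
        (∑ x ∈ Finset.range m, (p:ℚ)^(x+1)) + ∑ x ∈ Finset.range m, (x:ℚ)*(p:ℚ)^(x+1) := by
      have e1 := Finset.sum_range_succ (fun x => (x:ℚ) * (p:ℚ)^x) m
      have e2 := Finset.sum_range_succ' (fun x => (x:ℚ) * (p:ℚ)^x) m
      simp only [Nat.cast_zero, zero_mul, add_zero, Nat.cast_add, Nat.cast_one] at e1 e2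
      have e3 : ∑ x ∈ Finset.range m, ((x:ℚ)+1) * (p:ℚ)^(x+1) =
          (∑ x ∈ Finset.range m, (x:ℚ)*(p:ℚ)^(x+1)) + ∑ x ∈ Finset.range m, (p:ℚ)^(x+1) := by
        rw [← Finset.sum_add_distrib]
        exact Finset.sum_congr rfl fun x _ => by ring
      rw [e3] at e2
      linarith
    have hC34 : (∑ x ∈ Finset.range m, ((β₃:ℚ) + 1 + 2 * (x:ℚ)) * (p:ℚ)^(m-x)) -
        (∑ x ∈ Finset.range m, ((β₃:ℚ) + 2 + 2 * (x:ℚ)) * (p:ℚ)^(m-x)) =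
        -∑ x ∈ Finset.range m, (p:ℚ)^(x+1) := by
      rw [← Finset.sum_sub_distrib, ← h3, ← Finset.sum_neg_distrib]
      exact Finset.sum_congr rfl fun x _ => by ring
    have hp1 : (p:ℚ) ≠ 1 := by
      have h5 : (1:ℚ) < p := by exact_mod_cast hp.one_lt
      exact ne_of_gt h5
    have hG : ((p:ℚ)^(m+1) - 1)/((p:ℚ)-1) = 1 + ∑ x ∈ Finset.range m, (p:ℚ)^(x+1) := by
      rw [← geom_sum_eq hp1 (m+1)]
      exact h1
    have hsplit : ∑ x ∈ Finset.range m, (1 + 2 * (x:ℚ)) * (p:ℚ)^(x+1) =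
        (∑ x ∈ Finset.range m, (p:ℚ)^(x+1)) + 2 * ∑ x ∈ Finset.range m, (x:ℚ) * (p:ℚ)^(x+1) := by
      rw [Finset.mul_sum, ← Finset.sum_add_distrib]
      exact Finset.sum_congr rfl fun x _ => by ring
    rw [mul_div_assoc, hG]
    push_cast
    linear_combination (-2 : ℚ) * hB + hC34 + hsplit +
      ((∑ x ∈ Finset.range m, ((β₃:ℚ) + 1 + 2 * (x:ℚ)) * (p:ℚ)^(m-x)) -
       (∑ x ∈ Finset.range m, ((β₃:ℚ) + 2 + 2 * (x:ℚ)) * (p:ℚ)^(m-x)) +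
       (β₃:ℚ) + 1 + 2*(m:ℚ)) * hsq
end

section
/- Let W be a local ring with maximal ideal (p) and residue characteristic p, let L be a free W-module with basis f₀, e (among possibly more basis elements), and suppose given an endomorphism Π of L⊗Frac(W) with Π² = p. Suppose Π f₀ = ε₁ p^{ν₁} f₁ + p^n ξ₁ and Π f₁ = ε₀ p^{ν₀} f₀ + p^n ξ₀ with ε₀, ε₁ ∈ W^×, ν₀, ν₁ ≥ 0 integers, ξ₀, ξ₁ ∈ L, n ≥ 2, and that f₀ is part of a W-basis of L. Then ν₀ + ν₁ = 1, i.e. exactly one of ν₀, ν₁ equals 1 and the other equals 0. -/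
/-!
Applying `P` twice to `f₀` gives `p f₀ = ε₀ ε₁ p^(ν₀ + ν₁) f₀ + p^n Ξ`, so the `f₀`-coordinate
reads `p = ε₀ ε₁ p^(ν₀ + ν₁) + p^n c`. As `n ≥ 2`, `p - p^n c` is `p` times a unit, so `p` and
`p^(ν₀ + ν₁)` are associated. In a local ring this forces the exponent to be `1`: exponent `0`
would make `p` a unit, and an exponent `≥ 2` would give `p = p · y` with `y` in the maximal
ideal, hence `p = 0` since `1 - y` is a unit.
-/

namespace IsLocalRing

variable {R : Type*} [CommRing R] [IsLocalRing R]

lemma eq_zero_of_mul_eq_self {x y : R} (hy : y ∈ maximalIdeal R) (h : x * y = x) : x = 0 := by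
  have hunit : IsUnit (1 - y) := isUnit_one_sub_self_of_mem_nonunits y hy
  have hzero : x * (1 - y) = 0 := by rw [mul_sub, mul_one, h, sub_self]
  exact hunit.mul_left_eq_zero.mp hzero

lemma eq_one_of_associated_pow {p : R} (hp : p ∈ maximalIdeal R) (hp0 : p ≠ 0) {m : ℕ}
    (h : Associated p (p ^ m)) : m = 1 := by
  obtain ⟨u, hu⟩ := h
  match m, hu with
  | 0, hu =>
    exact absurd (IsUnit.of_mul_eq_one _ (hu.trans (pow_zero p))) hp
  | 1, _ => rfl
  | m + 2, hu =>
    refine absurd (eq_zero_of_mul_eq_self (y := p ^ (m + 1) * ↑u⁻¹) ?_ ?_) hp0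
    · exact Ideal.mul_mem_right _ _ (Ideal.pow_mem_of_mem _ hp _ m.succ_pos)
    · rw [← mul_assoc, ← pow_succ', ← hu, mul_assoc, Units.mul_inv, mul_one]

lemma associated_pow_of_eq_add_pow_mul {p u c : R} (hp : p ∈ maximalIdeal R) (hu : IsUnit u)
    {m n : ℕ} (hn : 2 ≤ n) (h : p = u * p ^ m + p ^ n * c) : Associated p (p ^ m) := by
  have hv : IsUnit (1 - p ^ (n - 1) * c) :=
    isUnit_one_sub_self_of_mem_nonunits _
      (Ideal.mul_mem_right _ _ (Ideal.pow_mem_of_mem _ hp _ (by omega)))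
  have hpn : p ^ n = p * p ^ (n - 1) := by rw [← pow_succ']; congr 1; omega
  have hfactor : p * (1 - p ^ (n - 1) * c) = u * p ^ m := by
    rw [hpn] at h
    linear_combination h
  exact Associated.trans ⟨hv.unit, hfactor⟩ (associated_unit_mul_left _ _ hu)

end IsLocalRing

theorem stmt_17_general (W : Type*) [CommRing W] [IsLocalRing W]
    (p : W) (hp : p ∈ IsLocalRing.maximalIdeal W) (hp0 : p ≠ 0)
    (L : Type*) [AddCommGroup L] [Module W L]
    (ι : Type*) (b : Module.Basis ι W L) (i₀ : ι)
    (P : L →ₗ[W] L) (hP : P ∘ₗ P = p • LinearMap.id)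
    (f₁ : L) (ε₀ ε₁ : W) (hε₀ : IsUnit ε₀) (hε₁ : IsUnit ε₁)
    (ν₀ ν₁ : ℕ) (ξ₀ ξ₁ : L) (n : ℕ) (hn : 2 ≤ n)
    (h0 : P (b i₀) = ε₁ • p ^ ν₁ • f₁ + p ^ n • ξ₁)
    (h1 : P f₁ = ε₀ • p ^ ν₀ • b i₀ + p ^ n • ξ₀) :
    ν₀ + ν₁ = 1 := by
  have hsquare : p • b i₀ =
      (ε₀ * ε₁ * p ^ (ν₀ + ν₁)) • b i₀ + p ^ n • (ε₁ • p ^ ν₁ • ξ₀ + P ξ₁) := by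
    have := LinearMap.congr_fun hP (b i₀)
    simp only [LinearMap.comp_apply, h0, map_add, map_smul, h1, LinearMap.smul_apply,
      LinearMap.id_apply] at this
    rw [← this]
    module
  have hcoord := congrArg (fun x => b.repr x i₀) hsquare
  simp only [map_add, map_smul, Module.Basis.repr_self, Finsupp.coe_add, Finsupp.coe_smul,
    Pi.add_apply, Pi.smul_apply, Finsupp.single_eq_same, smul_eq_mul, mul_one] at hcoord
  exact IsLocalRing.eq_one_of_associated_pow hp hp0
    (IsLocalRing.associated_pow_of_eq_add_pow_mul hp (hε₀.mul hε₁) hn hcoord)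

/-- Let `W` be a local domain with `p ≠ 0` in its maximal ideal, `L` a free
`W`-module with basis element `f₀ = b i₀`, and `P : L → L` a `W`-linear map with
`P ∘ P = p·id`. If `P f₀ = ε₁ p^{ν₁} f₁ + p^n ξ₁` and `P f₁ = ε₀ p^{ν₀} f₀ + p^n ξ₀`
with `ε₀, ε₁` units and `n ≥ 2`, then `ν₀ + ν₁ = 1`. -/
theorem stmt_17 (W : Type*) [CommRing W] [IsLocalRing W] [IsDomain W]
    (p : W) (hp : p ∈ IsLocalRing.maximalIdeal W) (hp0 : p ≠ 0)
    (L : Type*) [AddCommGroup L] [Module W L]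
    (ι : Type*) (b : Module.Basis ι W L) (i₀ : ι)
    (P : L →ₗ[W] L) (hP : P ∘ₗ P = p • LinearMap.id)
    (f₁ : L) (ε₀ ε₁ : W) (hε₀ : IsUnit ε₀) (hε₁ : IsUnit ε₁)
    (ν₀ ν₁ : ℕ) (ξ₀ ξ₁ : L) (n : ℕ) (hn : 2 ≤ n)
    (h0 : P (b i₀) = ε₁ • p ^ ν₁ • f₁ + p ^ n • ξ₁)
    (h1 : P f₁ = ε₀ • p ^ ν₀ • b i₀ + p ^ n • ξ₀) :
    ν₀ + ν₁ = 1 :=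
  stmt_17_general W p hp hp0 L ι b i₀ P hP f₁ ε₀ ε₁ hε₀ hε₁ ν₀ ν₁ ξ₀ ξ₁ n hn h0 h1
end
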